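/- arXiv:2210.03620 — 3 statements merged into one kernel-verified Lean document; each statement's English description precedes it below -/
import Mathlib

section
/- Consider the one-cluster extended model (u,e) on a finite connected graph 𝒢=(V,E) with nonempty boundary ∂⊆V and weight w, with boundary condition 1. For z∈V define the map σ̄_z(u,e) = (σ_z(u,e), e), where σ_z(u,e) = u if the open cluster C_z of z contains a boundary vertex, and otherwise σ_z(u,e)_y = R(u_y) = −conj(u_y) for every y∈C_z and σ_z(u,e)_y = u_y for y∉C_z. Then σ̄_z preserves the joint law P of (u,e). -/
/-!
Write `R θ = π - θ` for the reflection `u ↦ -conj u` on angles. The joint density of `(u, e)` is a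
product over edges of `w(u_x, u_y) p(u_x, u_y)` on open bonds and `w(u_x, u_y) (1 - p(u_x, u_y))`
on closed ones. An open bond lies inside or outside the cluster `C_z`, and `w`, `p` are invariant
under reflecting both spins. A closed bond may have exactly one reflected endpoint, but its weight
is `w(R u_x, u_y)` if `Re u_x Re u_y > 0` and `w(u_x, u_y)` otherwise, and reflecting `u_x`
exchanges both the two values and the two cases. So `σ̄_z` preserves the density off the null set
where some `Re u_x = 0`. It also preserves the reference measure: `R` preserves Haar measure, and
when `C_z` avoids the boundary it contains none of the spins pinned by the boundary condition.
-/

open MeasureTheory Real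

noncomputable section

instance : Fact (0 < 2 * π) := ⟨by positivity⟩

noncomputable instance : MeasureSpace Real.Angle :=
  (inferInstance : MeasureSpace (AddCircle (2 * π)))

/-- The spin space: the unit circle, represented by angles in `ℝ/2πℤ`. -/
abbrev Spin : Type := Real.Angle

/-- A weight function for an O(2) model, expressed through angles:
`w(e^{iθ₁}, e^{iθ₂}) = W(θ₁ - θ₂)`.  Rotation invariance is automatic; symmetry
and reflection invariance of `w` correspond to `W` being even, and the
monotonicity assumption on `θ ↦ w(1, e^{iθ})` corresponds to `W` being strictly
decreasing on `[0, π]`. -/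
structure IsWeight (W : Spin → ℝ) : Prop where
  pos : ∀ s, 0 < W s
  even : ∀ s, W (-s) = W s
  cont : Continuous W
  anti : StrictAntiOn (fun x : ℝ => W (x : Spin)) (Set.Icc 0 π)

variable {V : Type} [Fintype V] [LinearOrder V]

/-- Base measure on spin configurations: boundary spins are fixed to `1`
(angle `0`), the other spins get the Haar measure of the circle. -/
def spinBase (B : Finset V) : Measure (V → Spin) :=
  Measure.pi fun v => if v ∈ B then Measure.dirac (0 : Spin) else volume

/-- Density of the spin measure. -/
def spinDensity (G : SimpleGraph V) [DecidableRel G.Adj] (W : Spin → ℝ) (θ : V → Spin) : ENNReal :=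
  ∏ e ∈ G.edgeFinset, ENNReal.ofReal (W (θ e.inf - θ e.sup))

/-- One-cluster bond opening probability
`p(u₁,u₂) = (1 - w(R u₁, u₂)/w(u₁,u₂)) 1_{Re u₁ · Re u₂ > 0}`, where `R z = -conj z`. -/
def pBond (W : Spin → ℝ) (u₁ u₂ : Spin) : ℝ :=
  if 0 < u₁.cos * u₂.cos then 1 - W (((π : ℝ) : Spin) - (u₁ + u₂)) / W (u₁ - u₂) else 0

/-- Two-cluster model: opening probability for bonds of the first family,
associated with the reflection `R₁ z = ξ² conj z`, `ξ = e^{iπ/4}`. -/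
def pBond2 (W : Spin → ℝ) (u₁ u₂ : Spin) : ℝ :=
  if 0 < (u₁ + ((π / 4 : ℝ) : Spin)).cos * (u₂ + ((π / 4 : ℝ) : Spin)).cos then
    1 - W (((π / 2 : ℝ) : Spin) - (u₁ + u₂)) / W (u₁ - u₂) else 0

/-- Two-cluster model: opening probability for bonds of the second family,
associated with the reflection `R₂ z = conj(ξ)² conj z`. -/
def qBond2 (W : Spin → ℝ) (u₁ u₂ : Spin) : ℝ :=
  if 0 < (u₁ - ((π / 4 : ℝ) : Spin)).cos * (u₂ - ((π / 4 : ℝ) : Spin)).cos then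
    1 - W (((-(π / 2) : ℝ) : Spin) - (u₁ + u₂)) / W (u₁ - u₂) else 0

/-- Two-cluster model: probability that both bonds are open. -/
def cBond2 (W : Spin → ℝ) (u₁ u₂ : Spin) : ℝ :=
  if 0 < (u₁ - ((π / 4 : ℝ) : Spin)).cos * (u₂ - ((π / 4 : ℝ) : Spin)).cos ∧
      0 < (u₁ + ((π / 4 : ℝ) : Spin)).cos * (u₂ + ((π / 4 : ℝ) : Spin)).cos then
    1 - (W (((π / 2 : ℝ) : Spin) - (u₁ + u₂)) + W (((-(π / 2) : ℝ) : Spin) - (u₁ + u₂))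
        - W (((π : ℝ) : Spin) + (u₁ - u₂))) / W (u₁ - u₂)
  else 0

/-- Conditional weight of a one-cluster bond configuration given the spins. -/
def bondWeight1 (G : SimpleGraph V) [DecidableRel G.Adj] (W : Spin → ℝ) (θ : V → Spin)
    (b : Sym2 V → Bool) : ENNReal :=
  ∏ e ∈ G.edgeFinset,
    ENNReal.ofReal (if b e then pBond W (θ e.inf) (θ e.sup) else 1 - pBond W (θ e.inf) (θ e.sup))

/-- Joint weight for a pair of bonds with marginals `Ber(p)`, `Ber(q)` and
`P(both open) = c`. -/
def pairWeight (p q c : ℝ) : Bool → Bool → ℝ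
  | true, true => c
  | true, false => p - c
  | false, true => q - c
  | false, false => 1 - p - q + c

/-- Conditional weight of a two-cluster bond configuration given the spins. -/
def bondWeight2 (G : SimpleGraph V) [DecidableRel G.Adj] (W : Spin → ℝ) (θ : V → Spin)
    (b : (Sym2 V → Bool) × (Sym2 V → Bool)) : ENNReal :=
  ∏ e ∈ G.edgeFinset,
    ENNReal.ofReal (pairWeight (pBond2 W (θ e.inf) (θ e.sup)) (qBond2 W (θ e.inf) (θ e.sup))
      (cBond2 W (θ e.inf) (θ e.sup)) (b.1 e) (b.2 e))

/-- Unnormalized one-cluster extended measure. -/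
def extAux1 (G : SimpleGraph V) [DecidableRel G.Adj] (W : Spin → ℝ) (B : Finset V) :
    Measure ((V → Spin) × (Sym2 V → Bool)) :=
  ((spinBase B).prod Measure.count).withDensity fun ω =>
    spinDensity G W ω.1 * bondWeight1 G W ω.1 ω.2

/-- The one-cluster extended model `(u, e)`: spins with density
`∏_{(xy)∈E} w(u_x,u_y)` and boundary condition `1`, together with bonds that
are open independently with probability `p(u_x,u_y)` given the spins. -/
def extP1 (G : SimpleGraph V) [DecidableRel G.Adj] (W : Spin → ℝ) (B : Finset V) :
    Measure ((V → Spin) × (Sym2 V → Bool)) :=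
  (extAux1 G W B Set.univ)⁻¹ • extAux1 G W B

/-- Unnormalized two-cluster extended measure. -/
def extAux2 (G : SimpleGraph V) [DecidableRel G.Adj] (W : Spin → ℝ) (B : Finset V) :
    Measure ((V → Spin) × ((Sym2 V → Bool) × (Sym2 V → Bool))) :=
  ((spinBase B).prod Measure.count).withDensity fun ω =>
    spinDensity G W ω.1 * bondWeight2 G W ω.1 ω.2

/-- The two-cluster extended model `(u, e¹, e²)`. -/
def extP2 (G : SimpleGraph V) [DecidableRel G.Adj] (W : Spin → ℝ) (B : Finset V) :
    Measure ((V → Spin) × ((Sym2 V → Bool) × (Sym2 V → Bool))) :=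
  (extAux2 G W B Set.univ)⁻¹ • extAux2 G W B

/-- The graph of open bonds. -/
def openGraph (G : SimpleGraph V) (b : Sym2 V → Bool) : SimpleGraph V where
  Adj u v := G.Adj u v ∧ b s(u, v) = true
  symm := ⟨fun u v h => ⟨h.1.symm, by rw [Sym2.eq_swap]; exact h.2⟩⟩
  loopless := ⟨fun u h => G.loopless.irrefl u h.1⟩

/-- `x` is joined to the boundary `B` by a path of open bonds. -/
def connToBdry (G : SimpleGraph V) (B : Finset V) (x : V) (b : Sym2 V → Bool) : Prop :=
  ∃ v ∈ B, (openGraph G b).Reachable x v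

end

noncomputable section

open scoped Classical in
/-- The swapping map `σ̄_z`: if the open cluster of `z` touches the boundary,
do nothing; otherwise reflect every spin of the open cluster of `z` by
`R(z) = -conj(z)` (on angles, `θ ↦ π - θ`).  Bonds are unchanged. -/
def flipMap {V : Type} [Fintype V] [LinearOrder V] (G : SimpleGraph V) (B : Finset V) (z : V)
    (ω : (V → Spin) × (Sym2 V → Bool)) : (V → Spin) × (Sym2 V → Bool) :=
  if ∃ v ∈ B, (openGraph G ω.2).Reachable z v then ω
  else
    (fun y => if (openGraph G ω.2).Reachable z y then ((π : ℝ) : Spin) - ω.1 y else ω.1 y, ω.2)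

instance : BorelSpace Real.Angle := inferInstanceAs (BorelSpace (AddCircle (2 * π)))

instance : SecondCountableTopology Real.Angle :=
  inferInstanceAs (SecondCountableTopology (AddCircle (2 * π)))

instance : IsFiniteMeasure (volume : Measure Real.Angle) :=
  inferInstanceAs (IsFiniteMeasure (volume : Measure (AddCircle (2 * π))))

instance : (volume : Measure Real.Angle).IsAddLeftInvariant :=
  inferInstanceAs ((volume : Measure (AddCircle (2 * π))).IsAddLeftInvariant)

instance : (volume : Measure Real.Angle).IsNegInvariant :=
  inferInstanceAs ((volume : Measure (AddCircle (2 * π))).IsNegInvariant)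

instance : NullSingletonClass (volume : Measure Real.Angle) where
  measure_singleton x := by
    have h := AddCircle.volume_closedBall (T := 2 * π) (x := x) 0
    rw [mul_zero, min_eq_right (by positivity), ENNReal.ofReal_zero] at h
    erw [Metric.closedBall_zero] at h
    exact h

namespace Real.Angle

theorem cos_pi_sub (θ : Angle) : cos (π - θ) = -cos θ := by
  rw [← neg_sub, cos_neg, cos_sub_pi]

theorem ae_cos_ne_zero : ∀ᵐ θ : Angle, θ.cos ≠ 0 := by
  refine measure_mono_null (fun θ (hθ : ¬ cos θ ≠ 0) => ?_)
    ((Set.toFinite {((π / 2 : ℝ) : Angle), ((-π / 2 : ℝ) : Angle)}).measure_zero volume)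
  rcases cos_eq_zero_iff.mp (not_not.mp hθ) with h | h <;> simp [h]

end Real.Angle

namespace MeasureTheory

instance sigmaFinite_ite {α : Type*} [MeasurableSpace α] {p : Prop} [Decidable p]
    (μ ν : Measure α) [SigmaFinite μ] [SigmaFinite ν] : SigmaFinite (if p then μ else ν) := by
  split_ifs <;> infer_instance

theorem MeasurePreserving.withDensity {α β : Type*} [MeasurableSpace α] [MeasurableSpace β]
    {μ : Measure α} {ν : Measure β} {f : α → β} (hf : MeasurePreserving f μ ν)
    {ρ : β → ENNReal} {σ : α → ENNReal} (hρ : Measurable ρ) (h : ∀ᵐ x ∂μ, ρ (f x) = σ x) :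
    MeasurePreserving f (μ.withDensity σ) (ν.withDensity ρ) := by
  refine ⟨hf.measurable, Measure.ext fun s hs => ?_⟩
  rw [Measure.map_apply hf.measurable hs, withDensity_apply _ (hf.measurable hs),
    withDensity_apply _ hs, ← hf.setLIntegral_comp_preimage hs hρ]
  exact lintegral_congr_ae (ae_restrict_of_ae (h.mono fun x hx => hx.symm))

end MeasureTheory

def edgeWeight (W : Spin → ℝ) (θ₁ θ₂ : Spin) (b : Bool) : ℝ :=
  W (θ₁ - θ₂) * if b then pBond W θ₁ θ₂ else 1 - pBond W θ₁ θ₂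

section EdgeWeight

variable {W : Spin → ℝ}

theorem edgeWeight_pi_sub_pi_sub (hW : ∀ s, W (-s) = W s) (θ₁ θ₂ : Spin) (b : Bool) :
    edgeWeight W (π - θ₁) (π - θ₂) b = edgeWeight W θ₁ θ₂ b := by
  have hdiff : W ((π - θ₁) - (π - θ₂)) = W (θ₁ - θ₂) := by
    rw [← hW]; congr 1; abel
  have hsum : W (π - ((π - θ₁) + (π - θ₂))) = W (π - (θ₁ + θ₂)) := by
    rw [← hW]; congr 1; abel
  simp only [edgeWeight, pBond, Real.Angle.cos_pi_sub, neg_mul_neg, hdiff, hsum]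

theorem edgeWeight_false (hW₀ : ∀ s, W s ≠ 0) (θ₁ θ₂ : Spin) :
    edgeWeight W θ₁ θ₂ false
      = if 0 < θ₁.cos * θ₂.cos then W (π - (θ₁ + θ₂)) else W (θ₁ - θ₂) := by
  simp only [edgeWeight, pBond, Bool.false_eq_true, if_false]
  split_ifs
  · rw [sub_sub_cancel, mul_div_cancel₀ _ (hW₀ _)]
  · rw [sub_zero, mul_one]

theorem edgeWeight_pi_sub_left_false (hW₀ : ∀ s, W s ≠ 0) {θ₁ θ₂ : Spin}
    (h : θ₁.cos * θ₂.cos ≠ 0) :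
    edgeWeight W (π - θ₁) θ₂ false = edgeWeight W θ₁ θ₂ false := by
  rw [edgeWeight_false hW₀, edgeWeight_false hW₀, Real.Angle.cos_pi_sub, neg_mul]
  rcases h.lt_or_gt with hneg | hpos
  · rw [if_pos (neg_pos.mpr hneg), if_neg hneg.not_gt]; congr 1; abel
  · rw [if_neg (neg_neg_of_pos hpos).not_gt, if_pos hpos]; congr 1; abel

theorem edgeWeight_pi_sub_right_false (hW₀ : ∀ s, W s ≠ 0) (hW : ∀ s, W (-s) = W s)
    {θ₁ θ₂ : Spin} (h : θ₁.cos * θ₂.cos ≠ 0) :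
    edgeWeight W θ₁ (π - θ₂) false = edgeWeight W θ₁ θ₂ false := by
  rw [← edgeWeight_pi_sub_pi_sub hW, sub_sub_cancel, edgeWeight_pi_sub_left_false hW₀ h]

theorem edgeWeight_ite_pi_sub (hW₀ : ∀ s, W s ≠ 0) (hW : ∀ s, W (-s) = W s) {θ₁ θ₂ : Spin}
    (h : θ₁.cos * θ₂.cos ≠ 0) {r₁ r₂ : Prop} [Decidable r₁] [Decidable r₂] {b : Bool}
    (hb : b = true → (r₁ ↔ r₂)) :
    edgeWeight W (if r₁ then π - θ₁ else θ₁) (if r₂ then π - θ₂ else θ₂) b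
      = edgeWeight W θ₁ θ₂ b := by
  by_cases hr₁ : r₁ <;> by_cases hr₂ : r₂ <;> simp only [hr₁, hr₂, if_true, if_false]
  · exact edgeWeight_pi_sub_pi_sub hW θ₁ θ₂ b
  · obtain rfl : b = false := Bool.eq_false_iff.mpr fun hb' => hr₂ ((hb hb').mp hr₁)
    exact edgeWeight_pi_sub_left_false hW₀ h
  · obtain rfl : b = false := Bool.eq_false_iff.mpr fun hb' => hr₁ ((hb hb').mpr hr₂)
    exact edgeWeight_pi_sub_right_false hW₀ hW h

end EdgeWeight

theorem openGraph_adj_inf_sup {V : Type} [LinearOrder V] {G : SimpleGraph V}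
    {b : Sym2 V → Bool} {e : Sym2 V} (he : e ∈ G.edgeSet) (hb : b e = true) :
    (openGraph G b).Adj e.inf e.sup := by
  have he' : s(e.inf, e.sup) = e := Sym2.sortEquiv.symm_apply_apply e
  exact ⟨by rwa [← SimpleGraph.mem_edgeSet, he'], by rwa [he']⟩

section Flip

variable {V : Type} [Fintype V] [LinearOrder V]

theorem spinDensity_mul_bondWeight1 (G : SimpleGraph V) [DecidableRel G.Adj] {W : Spin → ℝ}
    (hW : ∀ s, 0 ≤ W s) (θ : V → Spin) (b : Sym2 V → Bool) :
    spinDensity G W θ * bondWeight1 G W θ b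
      = ∏ e ∈ G.edgeFinset, ENNReal.ofReal (edgeWeight W (θ e.inf) (θ e.sup) (b e)) := by
  rw [spinDensity, bondWeight1, ← Finset.prod_mul_distrib]
  exact Finset.prod_congr rfl fun e _ => (ENNReal.ofReal_mul (hW _)).symm

def flipSpins (G : SimpleGraph V) (B : Finset V) (z : V) (b : Sym2 V → Bool)
    (θ : V → Spin) : V → Spin :=
  (flipMap G B z (θ, b)).1

theorem flipMap_eq (G : SimpleGraph V) (B : Finset V) (z : V)
    (ω : (V → Spin) × (Sym2 V → Bool)) :
    flipMap G B z ω = (flipSpins G B z ω.2 ω.1, ω.2) := by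
  unfold flipSpins flipMap
  split_ifs <;> rfl

open scoped Classical in
theorem flipSpins_of_not_connected {G : SimpleGraph V} {B : Finset V} {z : V}
    {b : Sym2 V → Bool} (h : ¬ ∃ v ∈ B, (openGraph G b).Reachable z v) :
    flipSpins G B z b = fun θ y =>
      if (openGraph G b).Reachable z y then ((π : ℝ) : Spin) - θ y else θ y := by
  funext θ
  simp only [flipSpins, flipMap, if_neg h]

theorem flipSpins_of_connected {G : SimpleGraph V} {B : Finset V} {z : V}
    {b : Sym2 V → Bool} (h : ∃ v ∈ B, (openGraph G b).Reachable z v) :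
    flipSpins G B z b = id := by
  funext θ
  simp only [flipSpins, flipMap, if_pos h, id]

theorem spinDensity_mul_bondWeight1_flipSpins (G : SimpleGraph V) [DecidableRel G.Adj]
    (B : Finset V) {W : Spin → ℝ} (hW : IsWeight W) (z : V) (b : Sym2 V → Bool)
    {θ : V → Spin} (hθ : ∀ v, (θ v).cos ≠ 0) :
    spinDensity G W (flipSpins G B z b θ) * bondWeight1 G W (flipSpins G B z b θ) b
      = spinDensity G W θ * bondWeight1 G W θ b := by
  by_cases h : ∃ v ∈ B, (openGraph G b).Reachable z v
  · rw [flipSpins_of_connected h, id]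
  classical
  have hW₀ : ∀ s, 0 ≤ W s := fun s => (hW.pos s).le
  rw [flipSpins_of_not_connected h, spinDensity_mul_bondWeight1 G hW₀,
    spinDensity_mul_bondWeight1 G hW₀]
  refine Finset.prod_congr rfl fun e he => congrArg ENNReal.ofReal ?_
  refine edgeWeight_ite_pi_sub (fun s => (hW.pos s).ne') hW.even
    (mul_ne_zero (hθ _) (hθ _)) fun hb => ?_
  have hadj := openGraph_adj_inf_sup (SimpleGraph.mem_edgeFinset.mp he) hb
  exact ⟨fun hr => hr.trans hadj.reachable, fun hr => hr.trans hadj.symm.reachable⟩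

theorem measurable_flipMap (G : SimpleGraph V) (B : Finset V) (z : V) :
    Measurable (flipMap G B z) := by
  have hS : ∀ S : Set (Sym2 V → Bool), MeasurableSet S := fun S => S.to_countable.measurableSet
  unfold flipMap
  refine Measurable.ite (measurable_snd (hS {b | ∃ v ∈ B, (openGraph G b).Reachable z v}))
    measurable_id (Measurable.prodMk (measurable_pi_iff.mpr fun y => ?_) measurable_snd)
  exact Measurable.ite (measurable_snd (hS {b | (openGraph G b).Reachable z y}))
    (((measurable_pi_apply y).comp measurable_fst).const_sub _)
    ((measurable_pi_apply y).comp measurable_fst)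

theorem measurable_spinDensity_mul_bondWeight1 (G : SimpleGraph V) [DecidableRel G.Adj]
    {W : Spin → ℝ} (hW : Measurable W) :
    Measurable fun ω : (V → Spin) × (Sym2 V → Bool) =>
      spinDensity G W ω.1 * bondWeight1 G W ω.1 ω.2 := by
  have hspin : ∀ v, Measurable fun ω : (V → Spin) × (Sym2 V → Bool) => ω.1 v :=
    fun v => (measurable_pi_apply v).comp measurable_fst
  have hcos := Real.Angle.continuous_cos.measurable
  have hp : ∀ i j, Measurable fun ω : (V → Spin) × (Sym2 V → Bool) => pBond W (ω.1 i) (ω.1 j) :=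
    fun i j => Measurable.ite
      (measurableSet_lt measurable_const ((hcos.comp (hspin i)).mul (hcos.comp (hspin j))))
      (measurable_const.sub ((hW.comp (measurable_const.sub ((hspin i).add (hspin j)))).div
        (hW.comp ((hspin i).sub (hspin j)))))
      measurable_const
  refine (Finset.measurable_prod _ fun e _ => ?_).mul (Finset.measurable_prod _ fun e _ => ?_)
  · exact ENNReal.measurable_ofReal.comp (hW.comp ((hspin _).sub (hspin _)))
  · refine ENNReal.measurable_ofReal.comp
      (Measurable.ite ?_ (hp _ _) (measurable_const.sub (hp _ _)))
    exact measurable_snd ({b : Sym2 V → Bool | b e = true}.to_countable.measurableSet)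

instance (B : Finset V) : SigmaFinite (spinBase B) := by
  unfold spinBase
  infer_instance

theorem measurePreserving_flipSpins (G : SimpleGraph V) (B : Finset V) (z : V)
    (b : Sym2 V → Bool) : MeasurePreserving (flipSpins G B z b) (spinBase B) (spinBase B) := by
  by_cases h : ∃ v ∈ B, (openGraph G b).Reachable z v
  · rw [flipSpins_of_connected h]
    exact MeasurePreserving.id _
  classical
  rw [flipSpins_of_not_connected h, spinBase]
  refine measurePreserving_pi (fun v => if v ∈ B then Measure.dirac (0 : Spin) else volume)
    (fun v => if v ∈ B then Measure.dirac (0 : Spin) else volume)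
    (f := fun y t => if (openGraph G b).Reachable z y then ((π : ℝ) : Spin) - t else t) fun y => ?_
  by_cases hr : (openGraph G b).Reachable z y
  · have hy : y ∉ B := fun hy => h ⟨y, hy, hr⟩
    simp only [hr, hy, if_true, if_false]
    exact Measure.measurePreserving_sub_left volume _
  · simp only [hr, if_false]
    exact MeasurePreserving.id _

theorem measurePreserving_flipMap (G : SimpleGraph V) (B : Finset V) (z : V) :
    MeasurePreserving (flipMap G B z) ((spinBase B).prod Measure.count)
      ((spinBase B).prod Measure.count) := by
  have hskew : MeasurePreserving (fun p : (Sym2 V → Bool) × (V → Spin) =>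
      (p.1, flipSpins G B z p.1 p.2)) (Measure.count.prod (spinBase B))
      (Measure.count.prod (spinBase B)) :=
    (MeasurePreserving.id _).skew_product
      (measurable_fst.comp ((measurable_flipMap G B z).comp measurable_swap))
      (ae_of_all _ fun b => (measurePreserving_flipSpins G B z b).map_eq)
  convert Measure.measurePreserving_swap.comp (hskew.comp Measure.measurePreserving_swap) using 1
  funext ω
  exact flipMap_eq G B z ω

theorem ae_cos_ne_zero_spinBase (B : Finset V) : ∀ᵐ θ ∂spinBase B, ∀ v, (θ v).cos ≠ 0 := by
  unfold spinBase
  refine ae_all_iff.mpr fun v => (Measure.tendsto_eval_ae_ae (i := v)).eventually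
    (p := fun s : Spin => s.cos ≠ 0) ?_
  by_cases hv : v ∈ B
  · simp only [hv, if_true]
    have hmeas := (Real.Angle.continuous_cos.measurable (measurableSet_singleton 0)).compl
    exact (ae_dirac_iff hmeas).mpr (by simp)
  · simp only [hv, if_false]
    exact Real.Angle.ae_cos_ne_zero

end Flip

theorem statement_3_general {V : Type} [Fintype V] [LinearOrder V]
    (G : SimpleGraph V) [DecidableRel G.Adj]
    (B : Finset V)
    (W : Spin → ℝ) (hW : IsWeight W) (z : V) :
    MeasurePreserving (flipMap G B z) (extP1 G W B) (extP1 G W B) := by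
  have hgood : ∀ᵐ ω ∂(spinBase B).prod (Measure.count : Measure (Sym2 V → Bool)),
      ∀ v, (ω.1 v).cos ≠ 0 :=
    Measure.quasiMeasurePreserving_fst.ae (ae_cos_ne_zero_spinBase B)
  have hext : MeasurePreserving (flipMap G B z) (extAux1 G W B) (extAux1 G W B) := by
    refine (measurePreserving_flipMap G B z).withDensity
      (measurable_spinDensity_mul_bondWeight1 G hW.cont.measurable) (hgood.mono fun ω hω => ?_)
    rw [flipMap_eq]
    exact spinDensity_mul_bondWeight1_flipSpins G B hW z ω.2 hω
  exact hext.smul_measure _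

/-- In the one-cluster extended model `(u,e)` with boundary
condition `1` on a finite connected graph with nonempty boundary, the map
`σ̄_z` preserves the joint law of `(u,e)`. -/
theorem statement_3 {V : Type} [Fintype V] [LinearOrder V]
    (G : SimpleGraph V) [DecidableRel G.Adj] (hG : G.Connected)
    (B : Finset V) (hB : B.Nonempty)
    (W : Spin → ℝ) (hW : IsWeight W) (z : V) :
    MeasurePreserving (flipMap G B z) (extP1 G W B) (extP1 G W B) :=
  statement_3_general G B W hW z

end
end

section
/- Let ρ:[−1,1]→(0,∞) be increasing and convex. Then for all θ_x,θ_y∈[−π/4,π/4], ρ(cos(θ_x−θ_y)) + ρ(−cos(θ_x−θ_y)) ≥ ρ(sin(θ_x+θ_y)) + ρ(−sin(θ_x+θ_y)), with equality whenever θ_x∈{−π/4,π/4} or θ_y∈{−π/4,π/4}. -/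
open Real

private lemma key_sym (ρ : ℝ → ℝ) (hconv : ConvexOn ℝ (Set.Icc (-1 : ℝ) 1) ρ)
    {s t : ℝ} (hs : 0 ≤ s) (hst : s ≤ t) (ht : t ≤ 1) :
    ρ s + ρ (-s) ≤ ρ t + ρ (-t) := by
  rcases eq_or_lt_of_le (hs.trans hst) with h0 | h0
  · have hs0 : s = 0 := le_antisymm (by linarith) hs
    rw [hs0, ← h0]
  · have htmem : t ∈ Set.Icc (-1 : ℝ) 1 := ⟨by linarith, ht⟩
    have hntmem : -t ∈ Set.Icc (-1 : ℝ) 1 := ⟨by linarith, by linarith⟩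
    set l : ℝ := (t + s) / (2 * t) with hl
    have hl0 : 0 ≤ l := by positivity
    have hl1 : l ≤ 1 := by
      rw [hl, div_le_one (by linarith)]; linarith
    have hsum : l + (1 - l) = 1 := by ring
    have h1 := hconv.2 htmem hntmem hl0 (by linarith) hsum
    have h2 := hconv.2 htmem hntmem (by linarith : (0:ℝ) ≤ 1 - l) hl0 (by ring)
    have he1 : l • t + (1 - l) • (-t) = s := by
      simp only [smul_eq_mul, hl]
      field_simp
      ring
    have he2 : (1 - l) • t + l • (-t) = -s := by
      simp only [smul_eq_mul, hl]
      field_simp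
      ring
    rw [he1] at h1
    rw [he2] at h2
    simp only [smul_eq_mul] at h1 h2
    linarith

private lemma sin_le_cos_of_mem {θ : ℝ} (h : θ ∈ Set.Icc (-(π / 4)) (π / 4)) :
    Real.sin θ ≤ Real.cos θ := by
  obtain ⟨h1, h2⟩ := h
  have hpi := Real.pi_pos
  have hs : Real.sin θ ≤ Real.sin (π / 4) :=
    Real.sin_le_sin_of_le_of_le_pi_div_two (by linarith) (by linarith) (by linarith)
  have hco : Real.cos (π / 4) ≤ Real.cos θ := by
    rw [← Real.cos_abs θ]
    apply Real.cos_le_cos_of_nonneg_of_le_pi (abs_nonneg θ) (by linarith)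
    rw [abs_le]; constructor <;> linarith
  rw [Real.sin_pi_div_four, ← Real.cos_pi_div_four] at hs
  linarith

/-- Let `ρ : [-1,1] → (0,∞)` be increasing and convex.  Then
for all `θ_x, θ_y ∈ [-π/4, π/4]`,
`ρ(cos(θ_x-θ_y)) + ρ(-cos(θ_x-θ_y)) ≥ ρ(sin(θ_x+θ_y)) + ρ(-sin(θ_x+θ_y))`,
with equality whenever `θ_x ∈ {-π/4, π/4}` or `θ_y ∈ {-π/4, π/4}`. -/
theorem statement_12 (ρ : ℝ → ℝ) (hmono : MonotoneOn ρ (Set.Icc (-1) 1))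
    (hconv : ConvexOn ℝ (Set.Icc (-1) 1) ρ) (hpos : ∀ y ∈ Set.Icc (-1 : ℝ) 1, 0 < ρ y) :
    ∀ θx ∈ Set.Icc (-(π / 4)) (π / 4), ∀ θy ∈ Set.Icc (-(π / 4)) (π / 4),
      (ρ (Real.sin (θx + θy)) + ρ (-Real.sin (θx + θy))
          ≤ ρ (Real.cos (θx - θy)) + ρ (-Real.cos (θx - θy))) ∧
        ((θx = -(π / 4) ∨ θx = π / 4 ∨ θy = -(π / 4) ∨ θy = π / 4) →
          ρ (Real.sin (θx + θy)) + ρ (-Real.sin (θx + θy))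
            = ρ (Real.cos (θx - θy)) + ρ (-Real.cos (θx - θy))) := by
  intro θx hx θy hy
  set a := Real.sin (θx + θy) with ha
  set c := Real.cos (θx - θy) with hc
  have hdiff : c - a = (Real.cos θx - Real.sin θx) * (Real.cos θy - Real.sin θy) := by
    rw [ha, hc, Real.sin_add, Real.cos_sub]; ring
  have hsum : c + a = (Real.cos θx + Real.sin θx) * (Real.cos θy + Real.sin θy) := by
    rw [ha, hc, Real.sin_add, Real.cos_sub]; ring
  have hxneg : -θx ∈ Set.Icc (-(π / 4)) (π / 4) := ⟨by linarith [hx.2], by linarith [hx.1]⟩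
  have hyneg : -θy ∈ Set.Icc (-(π / 4)) (π / 4) := ⟨by linarith [hy.2], by linarith [hy.1]⟩
  have hx1 : Real.sin θx ≤ Real.cos θx := sin_le_cos_of_mem hx
  have hy1 : Real.sin θy ≤ Real.cos θy := sin_le_cos_of_mem hy
  have hx2 : -Real.cos θx ≤ Real.sin θx := by
    have := sin_le_cos_of_mem hxneg
    rw [Real.sin_neg, Real.cos_neg] at this; linarith
  have hy2 : -Real.cos θy ≤ Real.sin θy := by
    have := sin_le_cos_of_mem hyneg
    rw [Real.sin_neg, Real.cos_neg] at this; linarith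
  have hca : a ≤ c := by
    have : 0 ≤ c - a := hdiff ▸ mul_nonneg (by linarith) (by linarith)
    linarith
  have hca' : -c ≤ a := by
    have : 0 ≤ c + a := hsum ▸ mul_nonneg (by linarith) (by linarith)
    linarith
  have hc1 : c ≤ 1 := Real.cos_le_one _
  have hmain : ρ a + ρ (-a) ≤ ρ c + ρ (-c) := by
    rcases le_or_gt 0 a with h | h
    · exact key_sym ρ hconv h hca hc1
    · have := key_sym ρ hconv (by linarith : (0:ℝ) ≤ -a) (by linarith) hc1
      rw [neg_neg] at this; linarith
  refine ⟨hmain, ?_⟩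
  have hcos4 : Real.cos (π / 4) = Real.sin (π / 4) := by
    rw [Real.cos_pi_div_four, Real.sin_pi_div_four]
  rintro (h | h | h | h)
  · -- θx = -(π/4) : a = -c
    have hac : a = -c := by
      have : c + a = 0 := by
        rw [hsum, h, Real.cos_neg, Real.sin_neg, hcos4]; ring
      linarith
    rw [hac, neg_neg, add_comm]
  · have hac : a = c := by
      have : c - a = 0 := by rw [hdiff, h, hcos4]; ring
      linarith
    rw [hac]
  · have hac : a = -c := by
      have : c + a = 0 := by
        rw [hsum, h, Real.cos_neg, Real.sin_neg, hcos4]; ring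
      linarith
    rw [hac, neg_neg, add_comm]
  · have hac : a = c := by
      have : c - a = 0 := by rw [hdiff, h, hcos4]; ring
      linarith
    rw [hac]
end

section
/- Let g:ℝ→(0,∞) be even, 2π-periodic, and strictly decreasing on [0,π]. For θ₁,θ₂∈(−π/4,π/4) define p = 1 − g(θ₁+θ₂−π/2)/g(θ₁−θ₂), q = 1 − g(θ₁+θ₂+π/2)/g(θ₁−θ₂), and c = 1 − (g(θ₁+θ₂−π/2) + g(θ₁+θ₂+π/2) − g(θ₁−θ₂+π))/g(θ₁−θ₂). Then c ≤ p, c ≤ q, and p+q−1 ≤ c. In particular, if c ≥ 0 then max(0, p+q−1) ≤ c ≤ min(p,q). -/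
/-!
Write `S = θ₁ + θ₂` and `D = θ₁ - θ₂`. After clearing the common denominator `g D > 0`, the three
inequalities say `g (D + π) ≤ g (S + π/2)`, `g (D + π) ≤ g (S - π/2)` and `0 ≤ g (D + π)`, i.e. they are
the Fréchet bounds for the joint opening probability. By evenness and periodicity `g (D + π) = g (π - |D|)`,
and for `θ₁, θ₂ ∈ (-π/4, π/4)` both `|S ± π/2|` are at most `π - |D|` (since `|D| ± S = 2 max (±θ₁, ±θ₂)`),
so the first two follow from the monotonicity of `g` on `[0, π]`.
-/

open Real

lemma frechet_bounds_of_le {a b e d : ℝ} (hd : 0 < d) (he : 0 ≤ e) (hea : e ≤ a) (heb : e ≤ b) :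
    1 - (a + b - e) / d ≤ 1 - a / d ∧ 1 - (a + b - e) / d ≤ 1 - b / d ∧
      (1 - a / d) + (1 - b / d) - 1 ≤ 1 - (a + b - e) / d := by
  refine ⟨?_, ?_, ?_⟩ <;> rw [← sub_nonneg] <;> field_simp <;> linarith

lemma Function.Periodic.apply_add_pi_eq_apply_pi_sub_abs {g : ℝ → ℝ}
    (hper : Function.Periodic g (2 * π)) (heven : ∀ s, g (-s) = g s) (t : ℝ) :
    g (t + π) = g (π - |t|) := by
  rcases abs_cases t with ⟨ht, -⟩ | ⟨ht, -⟩
  · rw [ht, ← heven, ← hper, show -(t + π) + 2 * π = π - t by ring]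
  · rw [ht, sub_neg_eq_add, add_comm]

lemma Function.Periodic.apply_add_pi_le {g : ℝ → ℝ}
    (hper : Function.Periodic g (2 * π)) (heven : ∀ s, g (-s) = g s)
    (hanti : AntitoneOn g (Set.Icc 0 π)) {t x : ℝ} (hx : 0 ≤ x) (htx : |t| ≤ π - x) :
    g (t + π) ≤ g x := by
  have ht := abs_nonneg t
  rw [hper.apply_add_pi_eq_apply_pi_sub_abs heven]
  exact hanti ⟨hx, by linarith⟩ ⟨by linarith, by linarith⟩ (by linarith)

/-- Let `g : ℝ → (0,∞)` be even, `2π`-periodic and strictly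
decreasing on `[0, π]`.  For `θ₁, θ₂ ∈ (-π/4, π/4)` and
`p = 1 - g(θ₁+θ₂-π/2)/g(θ₁-θ₂)`, `q = 1 - g(θ₁+θ₂+π/2)/g(θ₁-θ₂)`,
`c = 1 - (g(θ₁+θ₂-π/2) + g(θ₁+θ₂+π/2) - g(θ₁-θ₂+π))/g(θ₁-θ₂)`, one has
`c ≤ p`, `c ≤ q` and `p + q - 1 ≤ c`; in particular if `c ≥ 0` then
`max(0, p+q-1) ≤ c ≤ min(p,q)`. -/
theorem statement_14 (g : ℝ → ℝ) (hpos : ∀ s, 0 < g s) (heven : ∀ s, g (-s) = g s)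
    (hper : Function.Periodic g (2 * π)) (hanti : StrictAntiOn g (Set.Icc 0 π))
    (θ₁ θ₂ : ℝ) (h₁ : θ₁ ∈ Set.Ioo (-(π / 4)) (π / 4)) (h₂ : θ₂ ∈ Set.Ioo (-(π / 4)) (π / 4))
    (p q c : ℝ)
    (hpdef : p = 1 - g (θ₁ + θ₂ - π / 2) / g (θ₁ - θ₂))
    (hqdef : q = 1 - g (θ₁ + θ₂ + π / 2) / g (θ₁ - θ₂))
    (hcdef : c = 1 - (g (θ₁ + θ₂ - π / 2) + g (θ₁ + θ₂ + π / 2) - g (θ₁ - θ₂ + π))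
        / g (θ₁ - θ₂)) :
    c ≤ p ∧ c ≤ q ∧ p + q - 1 ≤ c ∧ (0 ≤ c → max 0 (p + q - 1) ≤ c ∧ c ≤ min p q) := by
  obtain ⟨h1l, h1r⟩ := h₁
  obtain ⟨h2l, h2r⟩ := h₂
  have hlo : g (θ₁ - θ₂ + π) ≤ g (θ₁ + θ₂ - π / 2) := by
    rw [← heven (θ₁ + θ₂ - π / 2), neg_sub]
    exact hper.apply_add_pi_le heven hanti.antitoneOn (by linarith)
      (abs_le.mpr ⟨by linarith, by linarith⟩)
  have hhi : g (θ₁ - θ₂ + π) ≤ g (θ₁ + θ₂ + π / 2) :=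
    hper.apply_add_pi_le heven hanti.antitoneOn (by linarith [pi_pos])
      (abs_le.mpr ⟨by linarith, by linarith⟩)
  obtain ⟨hcp, hcq, hpqc⟩ := frechet_bounds_of_le (hpos _) (hpos _).le hlo hhi
  subst hpdef hqdef hcdef
  exact ⟨hcp, hcq, hpqc, fun hc => ⟨max_le hc hpqc, le_min hcp hcq⟩⟩
end
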